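/- Let $h_1 = \frac{1}{c}(1, \dots, M)^{\intercal}$, $h_2 = \frac{1}{c}(M-1, \dots, 1, 0)^{\intercal}$ with $c^2 = \frac{1}{3}(2M^3 + M)$, and let $A_0$, $A_1$ be the band matrices of the lattice model with force constants $\kappa_1$, $\kappa_2$. Then $h_1^{\intercal}A_0 h_1 + 2h_1^{\intercal}A_1^{\intercal}h_2 + h_2^{\intercal}A_0 h_2 = \frac{2M\kappa_1 + 8M\kappa_2 - 6\kappa_2}{M(2M^2+1)/3}$. -/
import Mathlib

open Matrix Finset

noncomputable def A0r (M : ℕ) (κ1 κ2 : ℝ) : Matrix (Fin M) (Fin M) ℝ := fun i j =>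
  if (i : ℤ) = (j : ℤ) then 2 * (κ1 + κ2)
  else if |(i : ℤ) - (j : ℤ)| = 1 then -κ1
  else if |(i : ℤ) - (j : ℤ)| = 2 then -κ2 else 0

noncomputable def A1r (M : ℕ) (κ1 κ2 : ℝ) : Matrix (Fin M) (Fin M) ℝ := fun i j =>
  if (i : ℕ) = 0 ∧ (j : ℕ) = M - 1 then -κ1
  else if ((i : ℕ) = 0 ∧ (j : ℕ) = M - 2) ∨ ((i : ℕ) = 1 ∧ (j : ℕ) = M - 1) then -κ2
  else 0

noncomputable def aA0 (κ1 κ2 : ℝ) (i j : ℕ) : ℝ :=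
  if (i : ℤ) = (j : ℤ) then 2 * (κ1 + κ2)
  else if |(i : ℤ) - (j : ℤ)| = 1 then -κ1
  else if |(i : ℤ) - (j : ℤ)| = 2 then -κ2 else 0

noncomputable def aA1 (M : ℕ) (κ1 κ2 : ℝ) (i j : ℕ) : ℝ :=
  if i = 0 ∧ j = M - 1 then -κ1
  else if (i = 0 ∧ j = M - 2) ∨ (i = 1 ∧ j = M - 1) then -κ2
  else 0

lemma aA0_decomp (κ1 κ2 : ℝ) (i j : ℕ) :
    aA0 κ1 κ2 i j =
      (if j = i + 0 then 2*(κ1+κ2) else 0) + (if j = i+1 then -κ1 else 0)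
      + (if i = j+1 then -κ1 else 0)
      + (if j = i+2 then -κ2 else 0) + (if i = j+2 then -κ2 else 0) := by
  unfold aA0
  simp only [abs_eq (show (0:ℤ) ≤ 1 by norm_num), abs_eq (show (0:ℤ) ≤ 2 by norm_num)]
  split_ifs <;> first | ring1 | (exfalso; omega)

lemma sum_sq_closed (n : ℕ) (α β γ : ℝ) :
    ∑ k ∈ range n, (α * (k:ℝ)^2 + β * (k:ℝ) + γ)
      = α * ((n:ℝ)*((n:ℝ)-1)*(2*(n:ℝ)-1)/6) + β * ((n:ℝ)*((n:ℝ)-1)/2) + γ * n := by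
  induction n with
  | zero => simp
  | succ n ih => rw [Finset.sum_range_succ, ih]; push_cast; ring

lemma filter_helper (n m : ℕ) (f : ℕ → ℝ) :
    ∑ i ∈ range n, (if i + m < n then f i else 0) = ∑ i ∈ range (n - m), f i := by
  rw [← Finset.sum_filter]
  congr 1
  ext x
  simp only [Finset.mem_filter, Finset.mem_range]
  omega

lemma double_diag (M m : ℕ) (v : ℝ) (G H : ℕ → ℝ) :
    ∑ i ∈ range M, ∑ j ∈ range M, G i * ((if j = i + m then v else 0) * H j)
      = ∑ i ∈ range (M - m), G i * (v * H (i + m)) := by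
  rw [← filter_helper M m (fun i => G i * (v * H (i + m)))]
  refine Finset.sum_congr rfl fun i _ => ?_
  simp only [ite_mul, zero_mul, mul_ite, mul_zero]
  rw [Finset.sum_ite_eq' (range M) (i + m) (fun j => G i * (v * H j))]
  simp [Finset.mem_range]

lemma double_diag' (M m : ℕ) (v : ℝ) (G H : ℕ → ℝ) :
    ∑ i ∈ range M, ∑ j ∈ range M, G i * ((if i = j + m then v else 0) * H j)
      = ∑ j ∈ range (M - m), G (j + m) * (v * H j) := by
  rw [Finset.sum_comm, ← filter_helper M m (fun j => G (j + m) * (v * H j))]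
  refine Finset.sum_congr rfl fun j _ => ?_
  simp only [ite_mul, zero_mul, mul_ite, mul_zero]
  rw [Finset.sum_ite_eq' (range M) (j + m) (fun i => G i * (v * H j))]
  simp [Finset.mem_range]

lemma quad (M : ℕ) (κ1 κ2 : ℝ) (G : ℕ → ℝ) :
    ∑ i ∈ range M, ∑ j ∈ range M, G i * (aA0 κ1 κ2 i j * G j)
      = 2*(κ1+κ2) * (∑ i ∈ range M, G i * G i)
        - 2*κ1 * (∑ i ∈ range (M-1), G i * G (i+1))
        - 2*κ2 * (∑ i ∈ range (M-2), G i * G (i+2)) := by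
  have expand : ∀ i j : ℕ, G i * (aA0 κ1 κ2 i j * G j) =
      G i * ((if j = i + 0 then 2*(κ1+κ2) else 0) * G j)
      + G i * ((if j = i+1 then -κ1 else 0) * G j)
      + G i * ((if i = j+1 then -κ1 else 0) * G j)
      + G i * ((if j = i+2 then -κ2 else 0) * G j)
      + G i * ((if i = j+2 then -κ2 else 0) * G j) := fun i j => by
    rw [aA0_decomp]; ring
  simp only [expand, Finset.sum_add_distrib]
  rw [double_diag M 0, double_diag M 1, double_diag' M 1, double_diag M 2, double_diag' M 2]
  simp only [Nat.sub_zero, Nat.add_zero]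
  have hA : ∑ x ∈ range M, G x * (2*(κ1+κ2)*G x) = ∑ i ∈ range M, 2*(κ1+κ2)*(G i*G i) :=
    Finset.sum_congr rfl fun i _ => by ring
  have hB : (∑ i ∈ range (M-1), G i * (-κ1 * G (i+1))) + (∑ j ∈ range (M-1), G (j+1) * (-κ1 * G j))
      = -∑ i ∈ range (M-1), 2*κ1*(G i * G (i+1)) := by
    rw [← Finset.sum_add_distrib, ← Finset.sum_neg_distrib]
    exact Finset.sum_congr rfl fun i _ => by ring
  have hC : (∑ i ∈ range (M-2), G i * (-κ2 * G (i+2))) + (∑ j ∈ range (M-2), G (j+2) * (-κ2 * G j))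
      = -∑ i ∈ range (M-2), 2*κ2*(G i * G (i+2)) := by
    rw [← Finset.sum_add_distrib, ← Finset.sum_neg_distrib]
    exact Finset.sum_congr rfl fun i _ => by ring
  rw [Finset.mul_sum, Finset.mul_sum, Finset.mul_sum]
  linarith [hA, hB, hC]

lemma cross (M : ℕ) (hM : 5 ≤ M) (κ1 κ2 : ℝ) (f g : ℕ → ℝ) :
    ∑ i ∈ range M, ∑ j ∈ range M, f i * (aA1 M κ1 κ2 j i * g j)
      = f (M-1) * (-κ1 * g 0) + f (M-2) * (-κ2 * g 0) + f (M-1) * (-κ2 * g 1) := by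
  obtain ⟨K, rfl⟩ : ∃ K, M = K + 2 := ⟨M - 2, by omega⟩
  have tail0 : ∀ j i : ℕ, aA1 (K+2) κ1 κ2 (j+2) i = 0 := by
    intro j i; unfold aA1; split_ifs <;> first | rfl | (exfalso; simp_all <;> omega)
  have inner : ∀ i ∈ range (K+2), ∑ j ∈ range (K+2), f i * (aA1 (K+2) κ1 κ2 j i * g j)
      = f i * (aA1 (K+2) κ1 κ2 0 i * g 0) + f i * (aA1 (K+2) κ1 κ2 1 i * g 1) := by
    intro i _
    rw [Finset.sum_range_succ' (fun j => f i * (aA1 (K+2) κ1 κ2 j i * g j)) (K+1),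
        Finset.sum_range_succ' (fun j => f i * (aA1 (K+2) κ1 κ2 (j+1) i * g (j+1))) K]
    have : ∑ j ∈ range K, f i * (aA1 (K+2) κ1 κ2 (j+1+1) i * g (j+1+1)) = 0 := by
      refine Finset.sum_eq_zero fun j _ => ?_
      rw [show j+1+1 = j+2 from rfl, tail0]; ring
    rw [this]; ring
  rw [Finset.sum_congr rfl inner]
  have d01 : ∀ i : ℕ, f i * (aA1 (K+2) κ1 κ2 0 i * g 0) + f i * (aA1 (K+2) κ1 κ2 1 i * g 1)
      = (if i = K+1 then f i * (-κ1 * g 0) + f i * (-κ2 * g 1) else 0)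
        + (if i = K then f i * (-κ2 * g 0) else 0) := by
    intro i
    unfold aA1
    split_ifs <;> first | ring1 | (exfalso; simp_all <;> omega)
  rw [Finset.sum_congr rfl (fun i _ => d01 i), Finset.sum_add_distrib,
      Finset.sum_ite_eq' (range (K+2)) (K+1) (fun i => f i * (-κ1 * g 0) + f i * (-κ2 * g 1)),
      Finset.sum_ite_eq' (range (K+2)) K (fun i => f i * (-κ2 * g 0))]
  have m1 : K + 1 ∈ range (K+2) := by simp
  have m2 : K ∈ range (K+2) := by simp
  rw [if_pos m1, if_pos m2]
  have e1 : K + 2 - 1 = K + 1 := rfl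
  have e2 : K + 2 - 2 = K := rfl
  rw [e1, e2]; ring

lemma conv (M : ℕ) (A : Matrix (Fin M) (Fin M) ℝ) (a : ℕ → ℕ → ℝ) (u v : Fin M → ℝ)
    (f g : ℕ → ℝ)
    (hA : ∀ i j : Fin M, A i j = a i j) (hu : ∀ i : Fin M, u i = f i)
    (hv : ∀ j : Fin M, v j = g j) :
    u ⬝ᵥ (A *ᵥ v) = ∑ i ∈ range M, ∑ j ∈ range M, f i * (a i j * g j) := by
  have step : u ⬝ᵥ (A *ᵥ v) = ∑ i : Fin M, ∑ j : Fin M, f (i : ℕ) * (a i j * g (j : ℕ)) := by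
    simp only [dotProduct, Matrix.mulVec, hA, hu, hv, Finset.mul_sum]
  rw [step]
  calc ∑ i : Fin M, ∑ j : Fin M, f (i:ℕ) * (a i j * g (j:ℕ))
      = ∑ i : Fin M, ∑ j ∈ range M, f (i:ℕ) * (a i j * g j) :=
        Finset.sum_congr rfl fun i _ =>
          Fin.sum_univ_eq_sum_range (fun j => f (i:ℕ) * (a i j * g j)) M
    _ = ∑ i ∈ range M, ∑ j ∈ range M, f i * (a i j * g j) :=
        Fin.sum_univ_eq_sum_range (fun i => ∑ j ∈ range M, f i * (a i j * g j)) M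

theorem hat_quadratic_form_value (M : ℕ) (hM : 5 ≤ M) (κ1 κ2 : ℝ)
    (c : ℝ) (hc : c = Real.sqrt ((2 * M ^ 3 + M) / 3))
    (h1 : Fin M → ℝ) (hh1 : h1 = fun k : Fin M => (((k : ℕ) : ℝ) + 1) / c)
    (h2 : Fin M → ℝ) (hh2 : h2 = fun k : Fin M => ((M : ℝ) - 1 - ((k : ℕ) : ℝ)) / c) :
    h1 ⬝ᵥ (A0r M κ1 κ2 *ᵥ h1) + 2 * (h1 ⬝ᵥ ((A1r M κ1 κ2)ᵀ *ᵥ h2))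
        + h2 ⬝ᵥ (A0r M κ1 κ2 *ᵥ h2) =
      (2 * M * κ1 + 8 * M * κ2 - 6 * κ2) / (M * (2 * (M : ℝ) ^ 2 + 1) / 3) := by
  subst hh1 hh2
  have hM5 : (5:ℝ) ≤ (M:ℝ) := by exact_mod_cast hM
  have hcpos : (0:ℝ) < (2 * (M:ℝ) ^ 3 + M) / 3 := by
    have h0 : (0:ℝ) < (M:ℝ) := by linarith
    have h3 : (0:ℝ) < (M:ℝ)^3 := by positivity
    linarith
  have hc2 : c ^ 2 = (2 * (M:ℝ) ^ 3 + M) / 3 := by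
    rw [hc]; exact Real.sq_sqrt hcpos.le
  have hc0 : c ≠ 0 := by
    rw [hc]; exact (Real.sqrt_pos.mpr hcpos).ne'
  set G1 : ℕ → ℝ := fun k => ((k:ℝ) + 1) / c with hG1
  set G2 : ℕ → ℝ := fun k => ((M:ℝ) - 1 - (k:ℝ)) / c with hG2
  rw [conv M (A0r M κ1 κ2) (aA0 κ1 κ2) _ _ G1 G1 (fun i j => rfl) (fun i => rfl) (fun j => rfl),
      conv M ((A1r M κ1 κ2)ᵀ) (fun i j => aA1 M κ1 κ2 j i) _ _ G1 G2
        (fun i j => rfl) (fun i => rfl) (fun j => rfl),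
      conv M (A0r M κ1 κ2) (aA0 κ1 κ2) _ _ G2 G2 (fun i j => rfl) (fun i => rfl) (fun j => rfl),
      quad M κ1 κ2 G1, quad M κ1 κ2 G2, cross M hM κ1 κ2 G1 G2]
  have c1 : ((M-1:ℕ):ℝ) = (M:ℝ) - 1 := by
    rw [Nat.cast_sub (by omega : 1 ≤ M)]; norm_num
  have c2 : ((M-2:ℕ):ℝ) = (M:ℝ) - 2 := by
    rw [Nat.cast_sub (by omega : 2 ≤ M)]; norm_num
  have s1 : ∑ i ∈ range M, G1 i * G1 i
      = (1/c^2) * ((M:ℝ)*((M:ℝ)-1)*(2*(M:ℝ)-1)/6) + (2/c^2) * ((M:ℝ)*((M:ℝ)-1)/2) + (1/c^2) * M := by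
    rw [← sum_sq_closed M (1/c^2) (2/c^2) (1/c^2)]
    exact Finset.sum_congr rfl fun i _ => by simp only [hG1]; ring
  have s2 : ∑ i ∈ range (M-1), G1 i * G1 (i+1)
      = (1/c^2) * (((M-1:ℕ):ℝ)*(((M-1:ℕ):ℝ)-1)*(2*((M-1:ℕ):ℝ)-1)/6)
        + (3/c^2) * (((M-1:ℕ):ℝ)*(((M-1:ℕ):ℝ)-1)/2) + (2/c^2) * ((M-1:ℕ):ℝ) := by
    rw [← sum_sq_closed (M-1) (1/c^2) (3/c^2) (2/c^2)]
    refine Finset.sum_congr rfl fun i _ => by simp only [hG1]; push_cast; ring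
  have s3 : ∑ i ∈ range (M-2), G1 i * G1 (i+2)
      = (1/c^2) * (((M-2:ℕ):ℝ)*(((M-2:ℕ):ℝ)-1)*(2*((M-2:ℕ):ℝ)-1)/6)
        + (4/c^2) * (((M-2:ℕ):ℝ)*(((M-2:ℕ):ℝ)-1)/2) + (3/c^2) * ((M-2:ℕ):ℝ) := by
    rw [← sum_sq_closed (M-2) (1/c^2) (4/c^2) (3/c^2)]
    refine Finset.sum_congr rfl fun i _ => by simp only [hG1]; push_cast; ring
  have s4 : ∑ i ∈ range M, G2 i * G2 i
      = (1/c^2) * ((M:ℝ)*((M:ℝ)-1)*(2*(M:ℝ)-1)/6) + ((2-2*(M:ℝ))/c^2) * ((M:ℝ)*((M:ℝ)-1)/2)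
        + (((M:ℝ)-1)^2/c^2) * M := by
    rw [← sum_sq_closed M (1/c^2) ((2-2*(M:ℝ))/c^2) (((M:ℝ)-1)^2/c^2)]
    exact Finset.sum_congr rfl fun i _ => by simp only [hG2]; ring
  have s5 : ∑ i ∈ range (M-1), G2 i * G2 (i+1)
      = (1/c^2) * (((M-1:ℕ):ℝ)*(((M-1:ℕ):ℝ)-1)*(2*((M-1:ℕ):ℝ)-1)/6)
        + ((3-2*(M:ℝ))/c^2) * (((M-1:ℕ):ℝ)*(((M-1:ℕ):ℝ)-1)/2)
        + ((((M:ℝ)-1)*((M:ℝ)-2))/c^2) * ((M-1:ℕ):ℝ) := by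
    rw [← sum_sq_closed (M-1) (1/c^2) ((3-2*(M:ℝ))/c^2) ((((M:ℝ)-1)*((M:ℝ)-2))/c^2)]
    refine Finset.sum_congr rfl fun i _ => by simp only [hG2]; push_cast; ring
  have s6 : ∑ i ∈ range (M-2), G2 i * G2 (i+2)
      = (1/c^2) * (((M-2:ℕ):ℝ)*(((M-2:ℕ):ℝ)-1)*(2*((M-2:ℕ):ℝ)-1)/6)
        + ((4-2*(M:ℝ))/c^2) * (((M-2:ℕ):ℝ)*(((M-2:ℕ):ℝ)-1)/2)
        + ((((M:ℝ)-1)*((M:ℝ)-3))/c^2) * ((M-2:ℕ):ℝ) := by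
    rw [← sum_sq_closed (M-2) (1/c^2) ((4-2*(M:ℝ))/c^2) ((((M:ℝ)-1)*((M:ℝ)-3))/c^2)]
    refine Finset.sum_congr rfl fun i _ => by simp only [hG2]; push_cast; ring
  rw [s1, s2, s3, s4, s5, s6, c1, c2]
  have hv1 : G1 (M-1) = (M:ℝ)/c := by simp only [hG1, c1]; ring
  have hv2 : G1 (M-2) = ((M:ℝ)-1)/c := by simp only [hG1, c2]; ring
  have hv3 : G2 0 = ((M:ℝ)-1)/c := by simp only [hG2]; norm_num
  have hv4 : G2 1 = ((M:ℝ)-2)/c := by simp only [hG2]; push_cast; ring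
  rw [hv1, hv2, hv3, hv4]
  have hd : (M:ℝ) * (2 * (M:ℝ)^2 + 1) / 3 = c^2 := by rw [hc2]; ring
  rw [hd]
  field_simp
  ring
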